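/- If D is a derivation in the natural deduction system NLT_ω whose set of open assumptions is Γ and whose end-formula is β, then the sequent Γ ⇒ β is derivable in SLT_ω. -/

import Mathlib

/-- Formulas of until-free propositional LTL: propositional variables (indexed by ℕ),
implication, negation, conjunction, disjunction, G (globally), F (eventually), X (next). -/
inductive Formula : Type
  | var : ℕ → Formula
  | imp : Formula → Formula → Formula
  | neg : Formula → Formula
  | and : Formula → Formula → Formula
  | or  : Formula → Formula → Formula
  | G   : Formula → Formula
  | F   : Formula → Formula
  | X   : Formula → Formula
deriving DecidableEq

/-- `Xpow i α` is `X^i α`: `X^0 α = α`, `X^{n+1} α = X^n (X α)`. -/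
def Xpow : ℕ → Formula → Formula
  | 0, α => α
  | n + 1, α => Xpow n (Formula.X α)

/-- Natural deduction derivations of NLT_ω. `ND Γ β` is the type of derivations with
set of open assumptions `Γ` and end-formula `β`. Discharge of assumptions (possibly
vacuous) is modelled by removing the discharged formula from the assumption set. -/
inductive ND : Set Formula → Formula → Type
  | hyp (α : Formula) : ND {α} α
  | impI (Γ : Set Formula) (i : ℕ) (α β : Formula) :
      ND Γ (Xpow i β) → ND (Γ \ {Xpow i α}) (Xpow i (Formula.imp α β))
  | impE (Γ₁ Γ₂ : Set Formula) (i : ℕ) (α β : Formula) :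
      ND Γ₁ (Xpow i (Formula.imp α β)) → ND Γ₂ (Xpow i α) → ND (Γ₁ ∪ Γ₂) (Xpow i β)
  | exp (Γ₁ Γ₂ : Set Formula) (i : ℕ) (α γ : Formula) :
      ND Γ₁ (Xpow i (Formula.neg α)) → ND Γ₂ (Xpow i α) → ND (Γ₁ ∪ Γ₂) γ
  | exm (Γ₁ Γ₂ : Set Formula) (i : ℕ) (α γ : Formula) :
      ND Γ₁ γ → ND Γ₂ γ →
      ND ((Γ₁ \ {Xpow i (Formula.neg α)}) ∪ (Γ₂ \ {Xpow i α})) γ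
  | negI (Γ₁ Γ₂ : Set Formula) (i j : ℕ) (α γ : Formula) :
      ND Γ₁ (Xpow j (Formula.neg γ)) → ND Γ₂ (Xpow j γ) →
      ND ((Γ₁ \ {Xpow i α}) ∪ (Γ₂ \ {Xpow i α})) (Xpow i (Formula.neg α))
  | andI (Γ₁ Γ₂ : Set Formula) (i : ℕ) (α β : Formula) :
      ND Γ₁ (Xpow i α) → ND Γ₂ (Xpow i β) → ND (Γ₁ ∪ Γ₂) (Xpow i (Formula.and α β))
  | andE1 (Γ : Set Formula) (i : ℕ) (α β : Formula) :
      ND Γ (Xpow i (Formula.and α β)) → ND Γ (Xpow i α)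
  | andE2 (Γ : Set Formula) (i : ℕ) (α β : Formula) :
      ND Γ (Xpow i (Formula.and α β)) → ND Γ (Xpow i β)
  | orI1 (Γ : Set Formula) (i : ℕ) (α β : Formula) :
      ND Γ (Xpow i α) → ND Γ (Xpow i (Formula.or α β))
  | orI2 (Γ : Set Formula) (i : ℕ) (α β : Formula) :
      ND Γ (Xpow i β) → ND Γ (Xpow i (Formula.or α β))
  | orE (Γ₀ Γ₁ Γ₂ : Set Formula) (i : ℕ) (α β γ : Formula) :
      ND Γ₀ (Xpow i (Formula.or α β)) → ND Γ₁ γ → ND Γ₂ γ →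
      ND (Γ₀ ∪ (Γ₁ \ {Xpow i α}) ∪ (Γ₂ \ {Xpow i β})) γ
  | GI (Γs : ℕ → Set Formula) (i : ℕ) (α : Formula) :
      (∀ j : ℕ, ND (Γs j) (Xpow (i + j) α)) → ND (⋃ j, Γs j) (Xpow i (Formula.G α))
  | GE (Γ : Set Formula) (i k : ℕ) (α : Formula) :
      ND Γ (Xpow i (Formula.G α)) → ND Γ (Xpow (i + k) α)
  | FI (Γ : Set Formula) (i k : ℕ) (α : Formula) :
      ND Γ (Xpow (i + k) α) → ND Γ (Xpow i (Formula.F α))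
  | FE (Γ₀ : Set Formula) (Γs : ℕ → Set Formula) (i : ℕ) (α γ : Formula) :
      ND Γ₀ (Xpow i (Formula.F α)) → (∀ j : ℕ, ND (Γs j) γ) →
      ND (Γ₀ ∪ ⋃ j, (Γs j \ {Xpow (i + j) α})) γ

/-- The single-succedent sequent calculus SLT_ω on sequents `Γ ⇒ γ` where `Γ` is a finite
set of formulas and `γ` is a formula (`some γ`) or empty (`none`). The boolean parameter
records whether the rule (cut) is allowed: `SLT true` is full SLT_ω, `SLT false` is
cut-free SLT_ω. -/
inductive SLT : Bool → Finset Formula → Option Formula → Prop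
  | id (c : Bool) (i p : ℕ) (Γ : Finset Formula) :
      SLT c (insert (Xpow i (Formula.var p)) Γ) (some (Xpow i (Formula.var p)))
  | cut {c : Bool} {Γ Θ : Finset Formula} {α : Formula} {γ : Option Formula} :
      c = true → SLT c Γ (some α) → SLT c (insert α Θ) γ → SLT c (Γ ∪ Θ) γ
  | weR {c : Bool} {Γ : Finset Formula} (α : Formula) :
      SLT c Γ none → SLT c Γ (some α)
  | impL {c : Bool} {Γ : Finset Formula} {γ : Option Formula} (i : ℕ) (α β : Formula) :
      SLT c Γ (some (Xpow i α)) → SLT c (insert (Xpow i β) Γ) γ →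
      SLT c (insert (Xpow i (Formula.imp α β)) Γ) γ
  | impR {c : Bool} {Γ : Finset Formula} (i : ℕ) (α β : Formula) :
      SLT c (insert (Xpow i α) Γ) (some (Xpow i β)) →
      SLT c Γ (some (Xpow i (Formula.imp α β)))
  | negL {c : Bool} {Γ : Finset Formula} (i : ℕ) (α : Formula) :
      SLT c Γ (some (Xpow i α)) → SLT c (insert (Xpow i (Formula.neg α)) Γ) none
  | negR {c : Bool} {Γ : Finset Formula} (i : ℕ) (α : Formula) :
      SLT c (insert (Xpow i α) Γ) none → SLT c Γ (some (Xpow i (Formula.neg α)))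
  | exM {c : Bool} {Γ : Finset Formula} {γ : Option Formula} (i : ℕ) (α : Formula) :
      SLT c (insert (Xpow i (Formula.neg α)) Γ) γ → SLT c (insert (Xpow i α) Γ) γ →
      SLT c Γ γ
  | andL {c : Bool} {Γ : Finset Formula} {γ : Option Formula} (i : ℕ) (α β : Formula) :
      SLT c (insert (Xpow i α) (insert (Xpow i β) Γ)) γ →
      SLT c (insert (Xpow i (Formula.and α β)) Γ) γ
  | andR {c : Bool} {Γ : Finset Formula} (i : ℕ) (α β : Formula) :
      SLT c Γ (some (Xpow i α)) → SLT c Γ (some (Xpow i β)) →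
      SLT c Γ (some (Xpow i (Formula.and α β)))
  | orL {c : Bool} {Γ : Finset Formula} {γ : Option Formula} (i : ℕ) (α β : Formula) :
      SLT c (insert (Xpow i α) Γ) γ → SLT c (insert (Xpow i β) Γ) γ →
      SLT c (insert (Xpow i (Formula.or α β)) Γ) γ
  | orR1 {c : Bool} {Γ : Finset Formula} (i : ℕ) (α β : Formula) :
      SLT c Γ (some (Xpow i α)) → SLT c Γ (some (Xpow i (Formula.or α β)))
  | orR2 {c : Bool} {Γ : Finset Formula} (i : ℕ) (α β : Formula) :
      SLT c Γ (some (Xpow i β)) → SLT c Γ (some (Xpow i (Formula.or α β)))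
  | GL {c : Bool} {Γ : Finset Formula} {γ : Option Formula} (i k : ℕ) (α : Formula) :
      SLT c (insert (Xpow (i + k) α) Γ) γ → SLT c (insert (Xpow i (Formula.G α)) Γ) γ
  | GR {c : Bool} {Γ : Finset Formula} (i : ℕ) (α : Formula) :
      (∀ j : ℕ, SLT c Γ (some (Xpow (i + j) α))) → SLT c Γ (some (Xpow i (Formula.G α)))
  | FL {c : Bool} {Γ : Finset Formula} {γ : Option Formula} (i : ℕ) (α : Formula) :
      (∀ j : ℕ, SLT c (insert (Xpow (i + j) α) Γ) γ) →
      SLT c (insert (Xpow i (Formula.F α)) Γ) γ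
  | FR {c : Bool} {Γ : Finset Formula} (i k : ℕ) (α : Formula) :
      SLT c Γ (some (Xpow (i + k) α)) → SLT c Γ (some (Xpow i (Formula.F α)))

/-! Introduction rules of NLT_ω become right rules of SLT_ω; an elimination rule becomes the
corresponding left rule, applied to identity sequents and cut against the major premise.
A discharged assumption is simply kept in the antecedent, so the translation is carried out
for every finite antecedent containing the open assumptions. -/

theorem Set.subset_coe_insert_of_sdiff_singleton_subset {ι : Type*} [DecidableEq ι]
    {s : Set ι} {t : Finset ι} {a : ι} (h : s \ {a} ⊆ ↑t) : s ⊆ ↑(insert a t) := by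
  rw [Finset.coe_insert]
  exact Set.sdiff_singleton_subset_iff.mp h

namespace SLT

theorem insert_self (c : Bool) (Γ : Finset Formula) :
    ∀ (α : Formula) (i : ℕ), SLT c (insert (Xpow i α) Γ) (some (Xpow i α))
  | Formula.var p, i => id c i p Γ
  | Formula.imp α β, i => by
      refine impR i α β ?_
      rw [Finset.insert_comm]
      exact impL i α β (insert_self c _ α i) (insert_self c _ β i)
  | Formula.neg α, i => by
      refine negR i α ?_
      rw [Finset.insert_comm]
      exact negL i α (insert_self c _ α i)
  | Formula.and α β, i => by
      refine andR i α β (andL i α β (insert_self c _ α i)) (andL i α β ?_)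
      rw [Finset.insert_comm]
      exact insert_self c _ β i
  | Formula.or α β, i =>
      orL i α β (orR1 i α β (insert_self c _ α i)) (orR2 i α β (insert_self c _ β i))
  | Formula.G α, i => GR i α fun j => SLT.GL i j α (insert_self c _ α (i + j))
  | Formula.F α, i => FL i α fun j => FR i j α (insert_self c _ α (i + j))
  | Formula.X α, i => insert_self c Γ α (i + 1)

theorem of_mem {c : Bool} {Γ : Finset Formula} {α : Formula} (h : α ∈ Γ) :
    SLT c Γ (some α) := by
  simpa [Xpow, Finset.insert_eq_of_mem h] using insert_self c Γ α 0

variable {Δ : Finset Formula} {α β : Formula} {γ : Option Formula} {i : ℕ}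

theorem cut_self (hα : SLT true Δ (some α)) (h : SLT true (insert α Δ) γ) :
    SLT true Δ γ := by
  simpa using cut rfl hα h

theorem impE (hab : SLT true Δ (some (Xpow i (Formula.imp α β))))
    (ha : SLT true Δ (some (Xpow i α))) : SLT true Δ (some (Xpow i β)) :=
  cut_self hab (impL i α β ha (insert_self true Δ β i))

theorem negE (hn : SLT true Δ (some (Xpow i (Formula.neg α))))
    (ha : SLT true Δ (some (Xpow i α))) : SLT true Δ none :=
  cut_self hn (negL i α ha)

theorem andE1 (h : SLT true Δ (some (Xpow i (Formula.and α β)))) :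
    SLT true Δ (some (Xpow i α)) :=
  cut_self h (andL i α β (insert_self true _ α i))

theorem andE2 (h : SLT true Δ (some (Xpow i (Formula.and α β)))) :
    SLT true Δ (some (Xpow i β)) := by
  refine cut_self h (andL i α β ?_)
  rw [Finset.insert_comm]
  exact insert_self true _ β i

theorem orE (h : SLT true Δ (some (Xpow i (Formula.or α β))))
    (ha : SLT true (insert (Xpow i α) Δ) γ) (hb : SLT true (insert (Xpow i β) Δ) γ) :
    SLT true Δ γ :=
  cut_self h (orL i α β ha hb)

theorem GE (k : ℕ) (h : SLT true Δ (some (Xpow i (Formula.G α)))) :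
    SLT true Δ (some (Xpow (i + k) α)) :=
  cut_self h (SLT.GL i k α (insert_self true Δ α (i + k)))

theorem FE (h : SLT true Δ (some (Xpow i (Formula.F α))))
    (hj : ∀ j, SLT true (insert (Xpow (i + j) α) Δ) γ) : SLT true Δ γ :=
  cut_self h (FL i α hj)

end SLT

open Set in
theorem ND.toSLT {Γ : Set Formula} {β : Formula} (D : ND Γ β) {Δ : Finset Formula}
    (hΓ : Γ ⊆ ↑Δ) : SLT true Δ (some β) := by
  induction D generalizing Δ with
  | hyp _ => exact SLT.of_mem (hΓ rfl)
  | impI _ i α β _ ih =>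
    exact SLT.impR i α β (ih (subset_coe_insert_of_sdiff_singleton_subset hΓ))
  | impE _ _ _ _ _ _ _ ih₁ ih₂ =>
    rw [union_subset_iff] at hΓ
    exact SLT.impE (ih₁ hΓ.1) (ih₂ hΓ.2)
  | exp _ _ _ _ γ _ _ ih₁ ih₂ =>
    rw [union_subset_iff] at hΓ
    exact SLT.weR γ (SLT.negE (ih₁ hΓ.1) (ih₂ hΓ.2))
  | exm _ _ i α _ _ _ ih₁ ih₂ =>
    rw [union_subset_iff] at hΓ
    exact SLT.exM i α (ih₁ (subset_coe_insert_of_sdiff_singleton_subset hΓ.1))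
      (ih₂ (subset_coe_insert_of_sdiff_singleton_subset hΓ.2))
  | negI _ _ i _ α _ _ _ ih₁ ih₂ =>
    rw [union_subset_iff] at hΓ
    exact SLT.negR i α (SLT.negE (ih₁ (subset_coe_insert_of_sdiff_singleton_subset hΓ.1))
      (ih₂ (subset_coe_insert_of_sdiff_singleton_subset hΓ.2)))
  | andI _ _ i α β _ _ ih₁ ih₂ =>
    rw [union_subset_iff] at hΓ
    exact SLT.andR i α β (ih₁ hΓ.1) (ih₂ hΓ.2)
  | andE1 _ _ _ _ _ ih => exact SLT.andE1 (ih hΓ)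
  | andE2 _ _ _ _ _ ih => exact SLT.andE2 (ih hΓ)
  | orI1 _ i α β _ ih => exact SLT.orR1 i α β (ih hΓ)
  | orI2 _ i α β _ ih => exact SLT.orR2 i α β (ih hΓ)
  | orE _ _ _ _ _ _ _ _ _ _ ih₀ ih₁ ih₂ =>
    simp only [union_subset_iff] at hΓ
    exact SLT.orE (ih₀ hΓ.1.1) (ih₁ (subset_coe_insert_of_sdiff_singleton_subset hΓ.1.2))
      (ih₂ (subset_coe_insert_of_sdiff_singleton_subset hΓ.2))
  | GI _ i α _ ih => exact SLT.GR i α fun j => ih j (iUnion_subset_iff.mp hΓ j)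
  | GE _ _ k _ _ ih => exact SLT.GE k (ih hΓ)
  | FI _ i k α _ ih => exact SLT.FR i k α (ih hΓ)
  | FE _ _ _ _ _ _ _ ih₀ ih =>
    rw [union_subset_iff, iUnion_subset_iff] at hΓ
    exact SLT.FE (ih₀ hΓ.1) fun j => ih j (subset_coe_insert_of_sdiff_singleton_subset (hΓ.2 j))

/-- If `D` is an NLT_ω derivation with set of open assumptions `Γ` and end-formula `β`,
then the sequent `Γ ⇒ β` is derivable in SLT_ω. -/
theorem stmt8 (Γ : Finset Formula) (β : Formula) (D : ND (↑Γ : Set Formula) β) :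
    SLT true Γ (some β) :=
  D.toSLT subset_rfl
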